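/- Let α ∈ [0,1)∖{1/2} and define g : (0,∞)∖{1} → ℝ by g(t) = |t²−1|^{4α−2} − (t^{2α}−1)⁴/(t²−1)². There exists C > 0, depending only on α, such that: g(t) ≤ C·t^{2α} for all 0 < t < 1/2; g(t) ≤ C·|t²−1|^{4α−2} for all t ∈ [1/2,2] with t ≠ 1; and g(t) ≤ C·t^{6α−4} for all t > 2. -/
import Mathlib


/-- The function `g(t) = |t²−1|^{4α−2} − (t^{2α}−1)⁴/(t²−1)²` from the Appendix. -/
noncomputable def gfun (α t : ℝ) : ℝ :=
  |t ^ 2 - 1| ^ (4 * α - 2) - (t ^ (2 * α) - 1) ^ 4 / (t ^ 2 - 1) ^ 2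

set_option maxHeartbeats 1600000 in
/-- Pointwise bounds for `g`: `g(t) ≤ C·t^{2α}` for `t < 1/2`,
`g(t) ≤ C·|t²−1|^{4α−2}` for `t ∈ [1/2,2]∖{1}`, and `g(t) ≤ C·t^{6α−4}` for `t > 2`. -/
theorem stmt16 (α : ℝ) (hα0 : 0 ≤ α) (hα1 : α < 1) (hα : α ≠ 1 / 2) :
    ∃ C > (0 : ℝ),
      (∀ t : ℝ, 0 < t → t < 1 / 2 → gfun α t ≤ C * t ^ (2 * α)) ∧
      (∀ t : ℝ, 1 / 2 ≤ t → t ≤ 2 → t ≠ 1 →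
        gfun α t ≤ C * |t ^ 2 - 1| ^ (4 * α - 2)) ∧
      (∀ t : ℝ, 2 < t → gfun α t ≤ C * t ^ (6 * α - 4)) := by
  refine ⟨8, by norm_num, ?_, ?_, ?_⟩
  · -- region 0 < t < 1/2
    intro t ht0 ht2
    set u : ℝ := 1 - t ^ 2 with hu_def
    have hu : (3:ℝ)/4 < u := by nlinarith
    have hu0 : 0 < u := by linarith
    have habs : |t ^ 2 - 1| = u := by
      rw [abs_sub_comm, abs_of_pos hu0]
    set x : ℝ := t ^ (2 * α) with hx_def
    have hx0 : 0 ≤ x := Real.rpow_nonneg ht0.le _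
    have hx1 : x ≤ 1 := Real.rpow_le_one ht0.le (by linarith) (by linarith)
    have hrw : u ^ (4 * α - 2) = u ^ (4 * α) / u ^ 2 := by
      rw [Real.rpow_sub hu0, show ((2:ℝ) = ((2:ℕ):ℝ)) by norm_num,
        Real.rpow_natCast]
    have h1 : u ^ (4 * α) ≤ 1 :=
      Real.rpow_le_one hu0.le (by nlinarith) (by linarith)
    have h2 : 1 - 4 * x ≤ (x - 1) ^ 4 := by nlinarith [sq_nonneg (x - 2), sq_nonneg x, sq_nonneg (x*x - 2*x)]
    have hsq : (t ^ 2 - 1) ^ 2 = u ^ 2 := by ring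
    have hu2 : (0:ℝ) < u ^ 2 := by positivity
    have key : gfun α t ≤ (4 * x) / u ^ 2 := by
      unfold gfun
      rw [habs, hrw, hsq, div_sub_div_same, div_le_div_iff₀ hu2 hu2]
      nlinarith [hu2]
    refine key.trans ?_
    rw [div_le_iff₀ hu2]
    nlinarith [mul_nonneg hx0 (show (0:ℝ) ≤ 8 * u ^ 2 - 4 by nlinarith)]
  · -- middle region
    intro t ht1 ht2 htne
    have hA : 0 ≤ |t ^ 2 - 1| ^ (4 * α - 2) := Real.rpow_nonneg (abs_nonneg _) _
    have hB : 0 ≤ (t ^ (2 * α) - 1) ^ 4 / (t ^ 2 - 1) ^ 2 := by positivity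
    unfold gfun
    linarith
  · -- region t > 2
    intro t ht
    have ht0 : (0:ℝ) < t := by linarith
    have hu0 : (0:ℝ) < t ^ 2 - 1 := by nlinarith
    have habs : |t ^ 2 - 1| = t ^ 2 - 1 := abs_of_pos hu0
    set u : ℝ := t ^ 2 - 1 with hu_def
    set X : ℝ := u ^ (2 * α) with hX_def
    set Y : ℝ := (t ^ (2 * α) - 1) ^ 2 with hY_def
    have hT2sq : (t ^ (2 * α)) ^ 2 = t ^ (4 * α) := by
      rw [← Real.rpow_natCast (t ^ (2 * α)) 2, ← Real.rpow_mul ht0.le]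
      norm_num
      ring_nf
    have hT1 : 1 ≤ t ^ (2 * α) :=
      Real.one_le_rpow (by linarith) (by linarith)
    have hXnn : 0 ≤ X := Real.rpow_nonneg hu0.le _
    have hYnn : 0 ≤ Y := sq_nonneg _
    have hXle : X ≤ t ^ (4 * α) := by
      have h1 : u ^ (2 * α) ≤ (t ^ 2) ^ (2 * α) :=
        Real.rpow_le_rpow hu0.le (by nlinarith) (by linarith)
      have h2 : (t ^ 2) ^ (2 * α) = t ^ (4 * α) := by
        rw [← Real.rpow_natCast t 2, ← Real.rpow_mul ht0.le]
        norm_num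
        ring_nf
      rw [hX_def]; calc u ^ (2*α) ≤ (t^2) ^ (2*α) := h1
        _ = t ^ (4*α) := h2
    have hYle : Y ≤ t ^ (4 * α) := by
      rw [hY_def, ← hT2sq]
      have : t ^ (2 * α) - 1 ≤ t ^ (2 * α) := by linarith
      nlinarith
    have hrw : u ^ (4 * α - 2) = X ^ 2 / u ^ 2 := by
      rw [hX_def, ← Real.rpow_natCast (u ^ (2 * α)) 2, ← Real.rpow_mul hu0.le,
        Real.rpow_sub hu0, show ((2:ℝ) = ((2:ℕ):ℝ)) by norm_num,
        Real.rpow_natCast]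
      norm_num
      ring_nf
    have hgfun : gfun α t = (X ^ 2 - Y ^ 2) / u ^ 2 := by
      unfold gfun
      rw [habs, hrw, show (t ^ (2 * α) - 1) ^ 4 = Y ^ 2 by rw [hY_def]; ring,
        div_sub_div_same]
    clear_value u X Y
    have hC0 : 0 ≤ (8:ℝ) * t ^ (6 * α - 4) := by positivity
    have hu2 : (0:ℝ) < u ^ 2 := by positivity
    rcases le_or_gt X Y with hle | hlt
    · have : X ^ 2 - Y ^ 2 ≤ 0 := by nlinarith
      have hg : gfun α t ≤ 0 := by
        rw [hgfun]; exact div_nonpos_iff.2 (Or.inr ⟨this, hu2.le⟩)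
      linarith
    · have hXY : X - Y ≤ 2 * t ^ (2 * α) := by
        rw [hY_def]; nlinarith [hT2sq]
      have hXpY : X + Y ≤ 2 * t ^ (4 * α) := by linarith
      have h6 : t ^ (2 * α) * t ^ (4 * α) = t ^ (6 * α) := by
        rw [← Real.rpow_add ht0]; ring_nf
      have hnum : X ^ 2 - Y ^ 2 ≤ 4 * t ^ (6 * α) := by
        have hfac : X ^ 2 - Y ^ 2 = (X - Y) * (X + Y) := by ring
        have hT2pos : 0 < t ^ (2 * α) := Real.rpow_pos_of_pos ht0 _
        have hT4pos : 0 < t ^ (4 * α) := Real.rpow_pos_of_pos ht0 _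
        rw [hfac, ← h6]
        have h1 : (X - Y) * (X + Y) ≤ (2 * t ^ (2 * α)) * (X + Y) :=
          mul_le_mul_of_nonneg_right hXY (by linarith)
        have h2 : (2 * t ^ (2 * α)) * (X + Y) ≤ (2 * t ^ (2 * α)) * (2 * t ^ (4 * α)) :=
          mul_le_mul_of_nonneg_left hXpY (by positivity)
        have h3 : (2 * t ^ (2 * α)) * (2 * t ^ (4 * α)) = 4 * (t ^ (2 * α) * t ^ (4 * α)) := by ring
        linarith
      have hrhs : t ^ (6 * α - 4) = t ^ (6 * α) / t ^ 4 := by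
        rw [Real.rpow_sub ht0, show ((4:ℝ) = ((4:ℕ):ℝ)) by norm_num,
          Real.rpow_natCast]
      have hT6pos : 0 < t ^ (6 * α) := Real.rpow_pos_of_pos ht0 _
      rw [hgfun, hrhs]
      have hu34 : (3:ℝ)/4 * t ^ 2 ≤ u := by rw [hu_def]; nlinarith
      have ht4 : (0:ℝ) < t ^ 4 := by positivity
      have h8 : 4 * t ^ 4 ≤ 8 * u ^ 2 := by nlinarith [sq_nonneg t]
      calc (X ^ 2 - Y ^ 2) / u ^ 2 ≤ (4 * t ^ (6 * α)) / u ^ 2 := by gcongr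
        _ ≤ 8 * (t ^ (6 * α) / t ^ 4) := by
            rw [mul_div_assoc', div_le_div_iff₀ hu2 ht4]
            nlinarith [mul_nonneg hT6pos.le (show (0:ℝ) ≤ 8 * u ^ 2 - 4 * t ^ 4 by linarith)]
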